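/- For n ≥ 2, the number of permutations π ∈ S_n such that π² has exactly one descent, located at position 1 (i.e., π²(1) > π²(2) and π²(i) < π²(i+1) for all 2 ≤ i ≤ n−1), equals the sum over i from 1 to ⌊(n−1)/2⌋ of e(n − (2i+1)), where e(m) is the number of involutions in S_m. -/

import Mathlib

set_option maxHeartbeats 1000000


open Equiv Finset

/-- Number of descents of a permutation of `Fin n`
(indices `i` such that `π(i) > π(i+1)`). -/
def des {n : ℕ} (π : Equiv.Perm (Fin n)) : ℕ :=
  (Finset.univ.filter
    (fun i : Fin n => ∃ j : Fin n, (j : ℕ) = (i : ℕ) + 1 ∧ π j < π i)).card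

/-- `σ` is the cycle `0 ↦ c, i ↦ i-1 (1 ≤ i ≤ c), i ↦ i (i > c)`. -/
def IsCyc {n : ℕ} (c : ℕ) (σ : Equiv.Perm (Fin n)) : Prop :=
  ∀ i : Fin n, ((σ i : ℕ) = if (i : ℕ) = 0 then c else if (i : ℕ) ≤ c then (i : ℕ) - 1 else (i : ℕ))

instance {n c : ℕ} (σ : Equiv.Perm (Fin n)) : Decidable (IsCyc c σ) := by
  unfold IsCyc; infer_instance

lemma step1 {n : ℕ} (hn : 2 ≤ n) (σ : Equiv.Perm (Fin n)) :
    (des σ = 1 ∧ σ ⟨1, by linarith⟩ < σ ⟨0, by linarith⟩) ↔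
    ∃ c, 1 ≤ c ∧ c < n ∧ IsCyc c σ := by
  set s : ℕ → ℕ := fun i => if h : i < n then (σ ⟨i, h⟩ : ℕ) else 0 with hs
  have hsval : ∀ (i : ℕ) (h : i < n), s i = (σ ⟨i, h⟩ : ℕ) := by
    intro i h; simp [hs, dif_pos h]
  have hsval' : ∀ i : Fin n, s (i : ℕ) = (σ i : ℕ) := by
    intro i; rw [hsval _ i.isLt]
  have hslt : ∀ i : ℕ, i < n → s i < n := by
    intro i h; rw [hsval i h]; exact (σ _).isLt
  have hsinj : ∀ i j : ℕ, i < n → j < n → s i = s j → i = j := by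
    intro i j hi hj h
    rw [hsval i hi, hsval j hj] at h
    have := σ.injective (Fin.ext h)
    exact congrArg Fin.val this
  have hlt_iff : (σ ⟨1, by omega⟩ < σ ⟨0, by omega⟩) ↔ s 1 < s 0 := by
    rw [Fin.lt_def, hsval 1 (by omega), hsval 0 (by omega)]
  constructor
  · rintro ⟨hdes, hlt⟩
    rw [hlt_iff] at hlt
    have h0mem : (⟨0, by omega⟩ : Fin n) ∈ (Finset.univ.filter
        (fun i : Fin n => ∃ j : Fin n, (j : ℕ) = (i : ℕ) + 1 ∧ σ j < σ i)) := by
      simp only [mem_filter, mem_univ, true_and]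
      refine ⟨⟨1, by omega⟩, rfl, ?_⟩
      rw [Fin.lt_def, ← hsval 1 (by omega), ← hsval 0 (by omega)]
      exact hlt
    have hset : (Finset.univ.filter
        (fun i : Fin n => ∃ j : Fin n, (j : ℕ) = (i : ℕ) + 1 ∧ σ j < σ i))
        = {(⟨0, by omega⟩ : Fin n)} := by
      obtain ⟨a, ha⟩ := Finset.card_eq_one.1 hdes
      rw [ha] at h0mem ⊢
      rw [Finset.mem_singleton] at h0mem
      rw [h0mem]
    have hmono : ∀ i : ℕ, 1 ≤ i → i + 1 < n → s i < s (i + 1) := by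
      intro i hi hin
      have hnot : (⟨i, by omega⟩ : Fin n) ∉ ({(⟨0, by omega⟩ : Fin n)} : Finset (Fin n)) := by
        simp only [Finset.mem_singleton, Fin.mk.injEq]
        omega
      rw [← hset, mem_filter] at hnot
      push_neg at hnot
      have hle := hnot (mem_univ _) ⟨i + 1, by omega⟩ rfl
      rw [Fin.le_def, ← hsval i (by omega), ← hsval (i+1) (by omega)] at hle
      have hne : s i ≠ s (i+1) := fun h => by
        have := hsinj i (i+1) (by omega) (by omega) h; omega
      omega
    have low : ∀ i : ℕ, 1 ≤ i → i < n → i - 1 ≤ s i := by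
      intro i
      induction i with
      | zero => omega
      | succ k ih =>
        intro h1 h2
        by_cases hk : k = 0
        · omega
        · have := ih (by omega) (by omega)
          have := hmono k (by omega) (by omega)
          omega
    have high : ∀ d i : ℕ, 1 ≤ i → i < n → n - 1 - i = d → s i ≤ i := by
      intro d
      induction d with
      | zero => intro i h1 h2 hd; have := hslt i h2; omega
      | succ k ih =>
        intro i h1 h2 hd
        have := ih (i+1) (by omega) (by omega) (by omega)
        have := hmono i h1 (by omega)
        omega
    have P3 : ∀ d i : ℕ, 1 ≤ i → i + d < n → s i = i → s (i + d) = i + d := by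
      intro d
      induction d with
      | zero => intro i h1 h2 h; simpa using h
      | succ k ih =>
        intro i h1 h2 h
        have hk := ih i h1 (by omega) h
        have := hmono (i + k) (by omega) (by omega)
        have := high (n - 1 - (i + k + 1)) (i + k + 1) (by omega) (by omega) rfl
        have : s (i + (k+1)) = s (i + k + 1) := by norm_num [Nat.add_assoc]
        omega
    refine ⟨s 0, by omega, hslt 0 (by omega), ?_⟩
    intro i
    rw [← hsval' i]
    rcases Nat.eq_zero_or_pos (i : ℕ) with h0 | h0
    · rw [h0, if_pos rfl]
    · have hi : (i : ℕ) < n := i.isLt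
      have hlow := low (i : ℕ) h0 hi
      have hhigh := high (n - 1 - (i:ℕ)) (i:ℕ) h0 hi rfl
      rw [if_neg (by omega)]
      by_cases hic : (i : ℕ) ≤ s 0
      · rw [if_pos hic]
        by_contra hne
        have hii : s (i:ℕ) = (i:ℕ) := by omega
        have hsc := P3 (s 0 - (i:ℕ)) (i:ℕ) h0 (by have := hslt 0 (by omega); omega) hii
        have harg : (i:ℕ) + (s 0 - (i:ℕ)) = s 0 := by omega
        rw [harg] at hsc
        have := hsinj (s 0) 0 (hslt 0 (by omega)) (by omega) hsc
        omega
      · rw [if_neg hic]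
        by_contra hne
        have hii : s (i:ℕ) = (i:ℕ) - 1 := by omega
        have P4 : ∀ d j : ℕ, 1 ≤ j → j + d = (i:ℕ) → s j = j - 1 := by
          intro d j hj1 hji
          have hj : j < n := by omega
          have hlj := low j hj1 hj
          have hhj := high (n - 1 - j) j hj1 hj rfl
          by_contra hne'
          have hjj : s j = j := by omega
          have h5 := P3 d j hj1 (by omega) hjj
          rw [hji] at h5
          omega
        have hc1 : s 0 + 1 ≤ (i : ℕ) := by omega
        have h6 := P4 ((i:ℕ) - (s 0 + 1)) (s 0 + 1) (by omega) (by omega)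
        have : s 0 + 1 = 0 := hsinj _ 0 (by omega) (by omega) (by omega)
        omega
  · rintro ⟨c, hc1, hcn, hC⟩
    have hval : ∀ (i : ℕ) (h : i < n), s i = if i = 0 then c else if i ≤ c then i - 1 else i := by
      intro i h
      rw [hsval i h]
      exact hC ⟨i, h⟩
    have h0 : s 0 = c := by rw [hval 0 (by omega)]; simp
    have h1 : s 1 = 0 := by rw [hval 1 (by omega)]; simp [hc1]
    have hset : (Finset.univ.filter
        (fun i : Fin n => ∃ j : Fin n, (j : ℕ) = (i : ℕ) + 1 ∧ σ j < σ i))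
        = {(⟨0, by omega⟩ : Fin n)} := by
      ext x
      simp only [mem_filter, mem_univ, true_and, Finset.mem_singleton]
      constructor
      · rintro ⟨j, hj, hlt⟩
        rw [Fin.lt_def, ← hsval' j, ← hsval' x] at hlt
        have hx := hval (x:ℕ) x.isLt
        have hjv := hval (j:ℕ) j.isLt
        rw [hj] at hjv hlt
        apply Fin.ext
        show (x : ℕ) = 0
        by_contra hx0
        rw [if_neg (by omega)] at hjv
        rw [if_neg hx0] at hx
        split_ifs at hx hjv <;> omega
      · intro hx
        subst hx
        refine ⟨⟨1, by omega⟩, rfl, ?_⟩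
        rw [Fin.lt_def, ← hsval 1 (by omega), ← hsval 0 (by omega)]
        omega
    constructor
    · unfold des; rw [hset]; simp
    · rw [hlt_iff]; omega

/-- Number of involutions in the symmetric group `S_m`. -/
def numInvolutions (m : ℕ) : ℕ :=
  (Finset.univ.filter (fun τ : Equiv.Perm (Fin m) => τ * τ = 1)).card

/-- structure of square roots of the cycle -/
lemma step2' {n c : ℕ} (hc1 : 1 ≤ c) (hcn : c < n) (π : Equiv.Perm (Fin n))
    (h : IsCyc c (π * π)) :
    c % 2 = 0 ∧ (∀ i : Fin n, (i : ℕ) ≤ c → (π i : ℕ) = ((i : ℕ) + c / 2) % (c + 1))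
      ∧ (∀ i : Fin n, c < (i : ℕ) → c < (π i : ℕ)) := by
  have hn0 : 0 < n := by omega
  have hsq : ∀ i : Fin n, π (π i) = (π * π) i := fun i => rfl
  -- values of σ on the support, numerically
  have hσval : ∀ i : Fin n, (i : ℕ) ≤ c → ((π * π) i : ℕ) = ((i : ℕ) + c) % (c + 1) := by
    intro i hi
    rw [h i]
    by_cases h0 : (i : ℕ) = 0
    · rw [if_pos h0, h0, Nat.zero_add, Nat.mod_eq_of_lt (by omega)]
    · rw [if_neg h0, if_pos hi, Nat.mod_eq_sub_mod (by omega),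
        Nat.mod_eq_of_lt (by omega)]
      omega
  -- σ fixes everything above c
  have hσfix : ∀ i : Fin n, c < (i : ℕ) → (π * π) i = i := by
    intro i hi
    apply Fin.ext
    rw [h i, if_neg (by omega), if_neg (by omega)]
  -- π maps {> c} into {> c}
  have hA : ∀ i : Fin n, c < (i : ℕ) → c < (π i : ℕ) := by
    intro i hi
    by_contra hle
    push_neg at hle
    have h1 : (π * π) (π i) = π i := by
      have : (π * π) (π i) = π ((π * π) i) := by
        simp [Equiv.Perm.mul_apply]
      rw [this, hσfix i hi]
    have h2 := h (π i)
    rw [congrArg Fin.val h1] at h2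
    by_cases h0 : ((π i : Fin n) : ℕ) = 0
    · rw [if_pos h0] at h2; omega
    · rw [if_neg h0, if_pos hle] at h2; omega
  -- π maps {≤ c} into {≤ c}, by a counting argument
  have hB : ∀ i : Fin n, (i : ℕ) ≤ c → (π i : ℕ) ≤ c := by
    have himg : (Finset.univ.filter (fun i : Fin n => c < (i : ℕ))).image π
        = Finset.univ.filter (fun i : Fin n => c < (i : ℕ)) := by
      apply Finset.eq_of_subset_of_card_le
      · intro x hx
        simp only [Finset.mem_image, mem_filter, mem_univ, true_and] at hx ⊢
        obtain ⟨a, ha, rfl⟩ := hx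
        exact hA a ha
      · rw [Finset.card_image_of_injective _ π.injective]
    intro i hi
    by_contra hgt
    push_neg at hgt
    have : π i ∈ (Finset.univ.filter (fun i : Fin n => c < (i : ℕ))).image π := by
      rw [himg]; simp only [mem_filter, mem_univ, true_and]; exact hgt
    simp only [Finset.mem_image, mem_filter, mem_univ, true_and] at this
    obtain ⟨a, ha, haa⟩ := this
    have := π.injective haa
    subst this
    omega
  -- the key downward induction: π i = (i + a) % (c+1) on the support, a := π 0
  set a : ℕ := (π ⟨0, hn0⟩ : ℕ) with hadef
  have ha : a ≤ c := hB ⟨0, hn0⟩ (by simp)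
  have key : ∀ d : ℕ, ∀ i : Fin n, (i : ℕ) ≤ c → c - (i : ℕ) = d →
      (π i : ℕ) = ((i : ℕ) + a) % (c + 1) := by
    intro d
    induction d with
    | zero =>
      intro i hi hd
      have hic : (i : ℕ) = c := by omega
      have h1 : (π * π) ⟨0, hn0⟩ = i := by
        apply Fin.ext
        rw [h ⟨0, hn0⟩]
        simpa using hic.symm
      have : π i = π ((π * π) ⟨0, hn0⟩) := by rw [h1]
      have h2 : π i = (π * π) (π ⟨0, hn0⟩) := by
        rw [this]; simp [Equiv.Perm.mul_apply]
      have h3 : (π (⟨0, hn0⟩ : Fin n) : ℕ) ≤ c := ha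
      have := hσval (π ⟨0, hn0⟩) h3
      rw [congrArg Fin.val h2, this, ← hadef, hic]
      rw [Nat.add_comm a c]
    | succ k ih =>
      intro i hi hd
      have hi1 : (i : ℕ) + 1 ≤ c := by omega
      have hi1n : (i : ℕ) + 1 < n := by omega
      have h1 : (π * π) ⟨(i:ℕ)+1, hi1n⟩ = i := by
        apply Fin.ext
        rw [h ⟨(i:ℕ)+1, hi1n⟩]
        simp only []
        rw [if_neg (by omega), if_pos (by omega)]
        omega
      have h2 : π i = (π * π) (π ⟨(i:ℕ)+1, hi1n⟩) := by
        calc π i = π ((π * π) ⟨(i:ℕ)+1, hi1n⟩) := by rw [h1]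
        _ = (π * π) (π ⟨(i:ℕ)+1, hi1n⟩) := by simp [Equiv.Perm.mul_apply]
      have h3 := hB ⟨(i:ℕ)+1, hi1n⟩ (by simpa using hi1)
      have h4 := hσval (π ⟨(i:ℕ)+1, hi1n⟩) h3
      have h5 := ih ⟨(i:ℕ)+1, hi1n⟩ (by simpa using hi1) (by simp; omega)
      rw [congrArg Fin.val h2, h4, h5, Nat.mod_add_mod]
      have hq : (⟨(i:ℕ)+1, hi1n⟩ : Fin n).val + a + c = ((i : ℕ) + a) + (c + 1) := by
        simp; omega
      rw [hq, Nat.add_mod_right]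
  -- evaluate at 0 : (a + a) % (c+1) = c
  have h2a : (a + a) % (c + 1) = c := by
    have h1 := key (c - a) (π ⟨0, hn0⟩) ha rfl
    have h2 : π (π ⟨0, hn0⟩) = (π * π) ⟨0, hn0⟩ := rfl
    have h3 := h ⟨0, hn0⟩
    rw [if_pos rfl] at h3
    rw [congrArg Fin.val h2, h3] at h1
    rw [← h1]
  have hca : c = a + a := by
    rcases Nat.lt_or_ge (a + a) (c + 1) with hlt | hge
    · rw [Nat.mod_eq_of_lt hlt] at h2a; omega
    · rw [Nat.mod_eq_sub_mod hge, Nat.mod_eq_of_lt (by omega)] at h2a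
      omega
  refine ⟨by omega, ?_, hA⟩
  intro i hi
  have := key (c - (i : ℕ)) i hi rfl
  rw [this]
  congr 2
  omega
/-- shift by `t` on `{0..c}`, act by `f` (shifted) on the complement -/
def bfun {n : ℕ} (c : ℕ) (hc : c < n) (t : ℕ) (f : Fin (n - (c + 1)) → Fin (n - (c + 1)))
    (i : Fin n) : Fin n :=
  if h : (i : ℕ) ≤ c then
    ⟨((i : ℕ) + t) % (c + 1), lt_of_lt_of_le (Nat.mod_lt _ (by omega)) (by omega)⟩
  else
    ⟨(c + 1) + (f ⟨(i : ℕ) - (c + 1), by omega⟩ : ℕ),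
      by have := (f ⟨(i : ℕ) - (c + 1), by omega⟩).isLt; omega⟩

lemma bfun_val_le {n : ℕ} (c : ℕ) (hc : c < n) (t : ℕ)
    (f : Fin (n - (c + 1)) → Fin (n - (c + 1))) (i : Fin n) (h : (i : ℕ) ≤ c) :
    (bfun c hc t f i : ℕ) = ((i : ℕ) + t) % (c + 1) := by
  rw [bfun, dif_pos h]

lemma bfun_le {n : ℕ} (c : ℕ) (hc : c < n) (t : ℕ)
    (f : Fin (n - (c + 1)) → Fin (n - (c + 1))) (i : Fin n) (h : (i : ℕ) ≤ c) :
    (bfun c hc t f i : ℕ) ≤ c := by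
  rw [bfun_val_le c hc t f i h]
  have := Nat.mod_lt ((i : ℕ) + t) (show 0 < c + 1 by omega)
  omega

lemma bfun_val_gt {n : ℕ} (c : ℕ) (hc : c < n) (t : ℕ)
    (f : Fin (n - (c + 1)) → Fin (n - (c + 1))) (i : Fin n) (h : c < (i : ℕ)) :
    (bfun c hc t f i : ℕ) = (c + 1) + (f ⟨(i : ℕ) - (c + 1), by omega⟩ : ℕ) := by
  rw [bfun, dif_neg (by omega)]

lemma bfun_gt {n : ℕ} (c : ℕ) (hc : c < n) (t : ℕ)
    (f : Fin (n - (c + 1)) → Fin (n - (c + 1))) (i : Fin n) (h : c < (i : ℕ)) :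
    c < (bfun c hc t f i : ℕ) := by
  rw [bfun_val_gt c hc t f i h]; omega

lemma bfun_bfun {n : ℕ} (c : ℕ) (hc : c < n) (t t' : ℕ)
    (f g : Fin (n - (c + 1)) → Fin (n - (c + 1))) (hts : t ≤ c + 1) (hts' : t' ≤ c + 1)
    (htt : t + t' = c + 1) (hfg : ∀ x, g (f x) = x) (i : Fin n) :
    bfun c hc t' g (bfun c hc t f i) = i := by
  by_cases h : (i : ℕ) ≤ c
  · apply Fin.ext
    rw [bfun_val_le c hc t' g _ (bfun_le c hc t f i h), bfun_val_le c hc t f i h,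
      Nat.mod_add_mod]
    have he : (i : ℕ) + t + t' = (i : ℕ) + (c + 1) := by omega
    rw [he, Nat.add_mod_right, Nat.mod_eq_of_lt (by omega)]
  · have h' : c < (i : ℕ) := by omega
    have harg : (⟨(bfun c hc t f i : ℕ) - (c + 1), by
        have h1 := bfun_gt c hc t f i h'
        have h2 := (bfun c hc t f i).isLt
        omega⟩ : Fin (n - (c + 1)))
        = f ⟨(i : ℕ) - (c + 1), by omega⟩ := by
      apply Fin.ext
      show (bfun c hc t f i : ℕ) - (c + 1) = _
      rw [bfun_val_gt c hc t f i h']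
      simp
    apply Fin.ext
    rw [bfun_val_gt c hc t' g _ (bfun_gt c hc t f i h'), harg, hfg]
    simp
    omega

def buildPerm {n : ℕ} (c : ℕ) (hc : c < n) (τ : Equiv.Perm (Fin (n - (c + 1)))) :
    Equiv.Perm (Fin n) where
  toFun := bfun c hc (c / 2) τ
  invFun := bfun c hc (c + 1 - c / 2) τ.symm
  left_inv := bfun_bfun c hc (c / 2) (c + 1 - c / 2) τ τ.symm (by omega) (by omega)
    (by omega) (fun x => Equiv.symm_apply_apply τ x)
  right_inv := bfun_bfun c hc (c + 1 - c / 2) (c / 2) τ.symm τ (by omega) (by omega)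
    (by omega) (fun x => Equiv.apply_symm_apply τ x)

lemma buildPerm_apply {n : ℕ} (c : ℕ) (hc : c < n) (τ : Equiv.Perm (Fin (n - (c + 1))))
    (i : Fin n) : buildPerm c hc τ i = bfun c hc (c / 2) τ i := rfl

lemma buildPerm_sq {n : ℕ} (c : ℕ) (hc1 : 1 ≤ c) (hc : c < n) (hce : c % 2 = 0)
    (τ : Equiv.Perm (Fin (n - (c + 1)))) (hτ : τ * τ = 1) :
    IsCyc c (buildPerm c hc τ * buildPerm c hc τ) := by
  intro i
  have happ : ((buildPerm c hc τ * buildPerm c hc τ) i : ℕ)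
      = (bfun c hc (c / 2) τ (bfun c hc (c / 2) τ i) : ℕ) := rfl
  rw [happ]
  by_cases h : (i : ℕ) ≤ c
  · rw [bfun_val_le c hc _ _ _ (bfun_le c hc _ _ i h), bfun_val_le c hc _ _ i h,
      Nat.mod_add_mod]
    have he : (i : ℕ) + c / 2 + c / 2 = (i : ℕ) + c := by omega
    rw [he]
    by_cases h0 : (i : ℕ) = 0
    · rw [if_pos h0, h0, Nat.zero_add, Nat.mod_eq_of_lt (by omega)]
    · rw [if_neg h0, if_pos h, Nat.mod_eq_sub_mod (by omega),
        Nat.mod_eq_of_lt (by omega)]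
      omega
  · have h' : c < (i : ℕ) := by omega
    have hττ : ∀ x, τ (τ x) = x := fun x => by
      have := congrArg (fun p => p x) hτ
      simpa using this
    have harg : (⟨(bfun c hc (c / 2) τ i : ℕ) - (c + 1), by
        have h1 := bfun_gt c hc (c / 2) τ i h'
        have h2 := (bfun c hc (c / 2) τ i).isLt
        omega⟩ : Fin (n - (c + 1)))
        = τ ⟨(i : ℕ) - (c + 1), by omega⟩ := by
      apply Fin.ext
      show (bfun c hc (c / 2) τ i : ℕ) - (c + 1) = _
      rw [bfun_val_gt c hc _ _ i h']
      simp
    rw [bfun_val_gt c hc _ _ _ (bfun_gt c hc _ _ i h'), harg, hττ,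
      if_neg (by omega), if_neg (by omega)]
    simp
    omega

/-- read off the involution on `{c+1,...,n-1}` -/
def extractFun {n : ℕ} (c : ℕ) (hc : c < n) (π : Equiv.Perm (Fin n))
    (j : Fin (n - (c + 1))) : Fin (n - (c + 1)) :=
  ⟨(π ⟨c + 1 + (j : ℕ), by omega⟩ : ℕ) - (c + 1),
    by have h1 := (π ⟨c + 1 + (j : ℕ), by omega⟩).isLt; have h2 := j.isLt; omega⟩

lemma sq_fix {n c : ℕ} (π : Equiv.Perm (Fin n)) (h : IsCyc c (π * π))
    (x : Fin n) (hx : c < (x : ℕ)) : π (π x) = x := by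
  have h1 : π (π x) = (π * π) x := rfl
  rw [h1]
  apply Fin.ext
  rw [h x, if_neg (by omega), if_neg (by omega)]


lemma extractFun_val' {n c : ℕ} (hc : c < n) (π : Equiv.Perm (Fin n))
    (j : Fin (n - (c + 1))) (x : Fin n) (hx : (x : ℕ) = c + 1 + (j : ℕ)) :
    (extractFun c hc π j : ℕ) = (π x : ℕ) - (c + 1) := by
  have hx' : x = ⟨c + 1 + (j : ℕ), by omega⟩ := Fin.ext hx
  rw [hx']
  rfl

lemma extract_invol {n c : ℕ} (hc1 : 1 ≤ c) (hc : c < n) (π : Equiv.Perm (Fin n))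
    (h : IsCyc c (π * π)) : Function.Involutive (extractFun c hc π) := by
  obtain ⟨hce, hkey, hA⟩ := step2' hc1 hc π h
  intro j
  have h1 : (extractFun c hc π j : ℕ)
      = (π ⟨c + 1 + (j : ℕ), by omega⟩ : ℕ) - (c + 1) := rfl
  have hπX : c < (π ⟨c + 1 + (j : ℕ), by omega⟩ : ℕ) :=
    hA ⟨c + 1 + (j : ℕ), by omega⟩ (by show c < c + 1 + (j : ℕ); omega)
  apply Fin.ext
  have hx : ((π ⟨c + 1 + (j : ℕ), by omega⟩ : Fin n) : ℕ)
      = c + 1 + ((extractFun c hc π j : Fin (n - (c+1))) : ℕ) := by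
    omega
  have h2 : (extractFun c hc π (extractFun c hc π j) : ℕ)
      = (π (π ⟨c + 1 + (j : ℕ), by omega⟩) : ℕ) - (c + 1) :=
    extractFun_val' hc π (extractFun c hc π j) (π ⟨c + 1 + (j : ℕ), by omega⟩) hx
  rw [h2, congrArg Fin.val (sq_fix π h ⟨c + 1 + (j : ℕ), by omega⟩
    (by show c < c + 1 + (j : ℕ); omega))]
  show c + 1 + (j : ℕ) - (c + 1) = (j : ℕ)
  omega

lemma count_c {n : ℕ} (c : ℕ) (hc1 : 1 ≤ c) (hc : c < n) (hce : c % 2 = 0) :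
    (Finset.univ.filter (fun π : Equiv.Perm (Fin n) => IsCyc c (π * π))).card
      = numInvolutions (n - (c + 1)) := by
  rw [numInvolutions]
  refine Finset.card_bij'
    (fun π hπ => Function.Involutive.toPerm (extractFun c hc π)
      (extract_invol hc1 hc π (Finset.mem_filter.1 hπ).2))
    (fun τ hτ => buildPerm c hc τ) ?_ ?_ ?_ ?_
  · -- forward lands in involutions
    intro π hπ
    simp only [Finset.mem_filter, Finset.mem_univ, true_and]
    apply Equiv.ext
    intro j
    have hinv := extract_invol hc1 hc π (Finset.mem_filter.1 hπ).2
    show (Function.Involutive.toPerm (extractFun c hc π) hinv)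
      ((Function.Involutive.toPerm (extractFun c hc π) hinv) j) = j
    simp only [Function.Involutive.coe_toPerm]
    exact hinv j
  · -- backward lands in filter
    intro τ hτ
    simp only [Finset.mem_filter, Finset.mem_univ, true_and] at hτ ⊢
    exact buildPerm_sq c hc1 hc hce τ hτ
  · -- buildPerm (extract π) = π
    intro π hπ
    have hπ' := (Finset.mem_filter.1 hπ).2
    obtain ⟨_, hkey, hA⟩ := step2' hc1 hc π hπ'
    apply Equiv.ext
    intro i
    rw [buildPerm_apply]
    by_cases h : (i : ℕ) ≤ c
    · apply Fin.ext
      rw [bfun_val_le c hc _ _ i h, hkey i h]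
    · have h' : c < (i : ℕ) := by omega
      apply Fin.ext
      rw [bfun_val_gt c hc _ _ i h']
      simp only [Function.Involutive.coe_toPerm]
      have h2 : (extractFun c hc π ⟨(i : ℕ) - (c + 1), by omega⟩ : ℕ) = (π i : ℕ) - (c + 1) :=
        extractFun_val' hc π _ i (by show (i : ℕ) = c + 1 + ((i : ℕ) - (c + 1)); omega)
      rw [h2]
      have := hA i h'
      omega
  · -- extract (buildPerm τ) = τ
    intro τ hτ
    apply Equiv.ext
    intro j
    simp only [Function.Involutive.coe_toPerm]
    apply Fin.ext
    have h2 : (extractFun c hc (buildPerm c hc τ) j : ℕ)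
        = ((buildPerm c hc τ) ⟨c + 1 + (j : ℕ), by omega⟩ : ℕ) - (c + 1) := rfl
    rw [h2, buildPerm_apply, bfun_val_gt c hc _ _ _ (by show c < c + 1 + (j : ℕ); omega)]
    have harg : (⟨((⟨c + 1 + (j : ℕ), by omega⟩ : Fin n) : ℕ) - (c + 1), by
        show c + 1 + (j : ℕ) - (c + 1) < n - (c + 1)
        have := j.isLt; omega⟩ : Fin (n - (c + 1))) = j := by
      apply Fin.ext
      show c + 1 + (j : ℕ) - (c + 1) = (j : ℕ)
      omega
    rw [harg]
    omega


/-- The number of permutations whose square has exactly one descent, at position 1,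
is `∑_{i=1}^{⌊(n−1)/2⌋} e(n−(2i+1))`. -/
theorem count_square_one_descent_at_first_position (n : ℕ) (hn : 2 ≤ n) :
    (Finset.univ.filter (fun π : Equiv.Perm (Fin n) =>
        des (π * π) = 1 ∧ (π * π) ⟨1, by omega⟩ < (π * π) ⟨0, by omega⟩)).card
      = ∑ i ∈ Finset.Icc 1 ((n - 1) / 2), numInvolutions (n - (2 * i + 1)) := by
  have key : (Finset.univ.filter (fun π : Equiv.Perm (Fin n) =>
        des (π * π) = 1 ∧ (π * π) ⟨1, by omega⟩ < (π * π) ⟨0, by omega⟩))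
      = (Finset.Icc 1 ((n - 1) / 2)).biUnion
        (fun i => Finset.univ.filter (fun π : Equiv.Perm (Fin n) => IsCyc (2 * i) (π * π))) := by
    ext π
    simp only [Finset.mem_biUnion, Finset.mem_filter, Finset.mem_univ, true_and,
      Finset.mem_Icc]
    constructor
    · intro h
      obtain ⟨c, hc1, hcn, hC⟩ := (step1 hn (π * π)).1 h
      obtain ⟨hce, -, -⟩ := step2' hc1 hcn π hC
      refine ⟨c / 2, ⟨by omega, by omega⟩, ?_⟩
      have hcc : 2 * (c / 2) = c := by omega
      rw [hcc]
      exact hC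
    · rintro ⟨i, ⟨hi1, hi2⟩, hC⟩
      exact (step1 hn (π * π)).2 ⟨2 * i, by omega, by omega, hC⟩
  rw [key, Finset.card_biUnion]
  · apply Finset.sum_congr rfl
    intro i hi
    rw [Finset.mem_Icc] at hi
    rw [count_c (2 * i) (by omega) (by omega) (by omega)]
  · intro x hx y hy hxy
    rw [Finset.mem_coe, Finset.mem_Icc] at hx hy
    intro s hsx hsy π hπ
    have h1 := (Finset.mem_filter.1 (hsx hπ)).2
    have h2 := (Finset.mem_filter.1 (hsy hπ)).2
    exfalso
    apply hxy
    have e1 := h1 ⟨0, by omega⟩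
    have e2 := h2 ⟨0, by omega⟩
    rw [if_pos rfl] at e1
    rw [if_pos rfl] at e2
    have exy : (2 * x : ℕ) = 2 * y := e1.symm.trans e2
    omega
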